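/- The minimizer of C(p) = S(Gp) − S(p) + E_p[f] over distributions supported within a single island of G is unique. -/

import Mathlib

/-! The cost is convex: with `m` the midpoint of `p` and `q`, `C p + C q - 2 C m` is the sum of the
data-processing gaps `KL(p‖m) - KL(Gp‖Gm)` and `KL(q‖m) - KL(Gq‖Gm)`, which are nonnegative by the
log-sum inequality. For two minimizers both gaps vanish, and the equality case of the log-sum
inequality gives `p x / m x = Gp y / Gm y` whenever `G y x > 0`; so `p / m` is constant on the
island, and `p = m`.

This needs `m > 0` on the island, i.e. that a minimizer has full support there. Moving mass `t`
onto an unoccupied state `v` sharing an output `y` with an occupied state raises `S(p)` by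
`-t log t` but `S(Gp)` by at most `-(1 - G y v) t log t + O(t)`, because `Gp y > 0` already; for
small `t` the cost drops. -/

open Finset Real

def isDist {X : Type*} [Fintype X] (p : X → ℝ) : Prop :=
  (∀ x, 0 ≤ p x) ∧ ∑ x, p x = 1

def isStoch {X : Type*} [Fintype X] (G : X → X → ℝ) : Prop :=
  (∀ y x, 0 ≤ G y x) ∧ ∀ x, ∑ y, G y x = 1

def push {X : Type*} [Fintype X] (G : X → X → ℝ) (p : X → ℝ) : X → ℝ :=
  fun y => ∑ x, G y x * p x

noncomputable def KL {X : Type*} [Fintype X] (p q : X → ℝ) : ℝ :=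
  ∑ x, p x * Real.log (p x / q x)

noncomputable def Ent {X : Type*} [Fintype X] (p : X → ℝ) : ℝ :=
  -∑ x, p x * Real.log (p x)

noncomputable def cost {X : Type*} [Fintype X] (G : X → X → ℝ) (f : X → ℝ) (p : X → ℝ) : ℝ :=
  Ent (push G p) - Ent p + ∑ x, p x * f x

/-- Two states are related iff they can both send probability to a common output. -/
def islandRel {X : Type*} [Fintype X] (G : X → X → ℝ) : X → X → Prop :=
  fun a b => ∃ y, 0 < G y a ∧ 0 < G y b

/-- `c` is an island of `G`: an equivalence class of the transitive (equivalence)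
closure of `islandRel G`. -/
def IsIsland {X : Type*} [Fintype X] (G : X → X → ℝ) (c : Set X) : Prop :=
  ∃ x₀, c = {x | Relation.EqvGen (islandRel G) x x₀}

open InformationTheory

lemma mul_log_div_eq_sub {a b : ℝ} (hab : a ≠ 0 → b ≠ 0) :
    a * log (a / b) = a * log a - a * log b := by
  by_cases ha : a = 0
  · simp [ha]
  · rw [log_div ha (hab ha)]; ring

lemma mul_klFun_div {a c : ℝ} (hac : a ≠ 0 → c ≠ 0) :
    c * klFun (a / c) = a * log (a / c) + c - a := by
  by_cases hc : c = 0
  · have ha : a = 0 := by_contra fun ha => hac ha hc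
    simp [ha, hc]
  · rw [klFun_apply]; field_simp

lemma negMulLog_le_tangent {a x : ℝ} (ha : 0 < a) (hx : 0 ≤ x) :
    negMulLog x ≤ negMulLog a + (-log a - 1) * (x - a) := by
  have h := mul_nonneg ha.le (klFun_nonneg (div_nonneg hx ha.le))
  rw [mul_klFun_div fun _ => ha.ne', mul_log_div_eq_sub fun _ => ha.ne'] at h
  simp only [negMulLog]
  linarith

section LogSum

variable {ι : Type*} [Fintype ι] {a b : ι → ℝ}

lemma sum_div_sum_mul_ne_zero (ha : ∀ i, 0 ≤ a i) (hb : ∀ i, 0 ≤ b i)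
    (hab : ∀ i, a i ≠ 0 → b i ≠ 0) {i : ι} (hai : a i ≠ 0) :
    (∑ j, a j) / (∑ j, b j) * b i ≠ 0 := by
  have hpos : ∀ {c : ι → ℝ}, (∀ j, 0 ≤ c j) → c i ≠ 0 → 0 < ∑ j, c j := fun hc hci =>
    (lt_of_le_of_ne (hc i) (Ne.symm hci)).trans_le (single_le_sum (fun j _ => hc j) (mem_univ i))
  exact mul_ne_zero (div_pos (hpos ha hai) (hpos hb (hab i hai))).ne' (hab i hai)

lemma log_sum_gap_eq (ha : ∀ i, 0 ≤ a i) (hb : ∀ i, 0 ≤ b i)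
    (hab : ∀ i, a i ≠ 0 → b i ≠ 0) :
    ∑ i, a i * log (a i / b i) - (∑ i, a i) * log ((∑ i, a i) / ∑ i, b i) =
      ∑ i, (∑ j, a j) / (∑ j, b j) * b i * klFun (a i / ((∑ j, a j) / (∑ j, b j) * b i)) := by
  have hμ := fun i => sum_div_sum_mul_ne_zero ha hb hab (i := i)
  set μ := (∑ j, a j) / ∑ j, b j
  have hμB : μ * ∑ j, b j = ∑ j, a j := by
    by_cases hB : ∑ j, b j = 0
    · have hb0 : ∀ i, b i = 0 := fun i =>
        (sum_eq_zero_iff_of_nonneg fun j _ => hb j).1 hB i (mem_univ i)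
      simp [hB, fun i => by_contra fun h => hab i h (hb0 i)]
    · exact div_mul_cancel₀ _ hB
  simp_rw [mul_klFun_div (hμ _)]
  have hterm : ∀ i, a i * log (a i / (μ * b i)) = a i * log (a i / b i) - a i * log μ := fun i => by
    by_cases hai : a i = 0
    · simp [hai]
    · have hμi := hμ i hai
      rw [log_div hai hμi, log_div hai (hab i hai), log_mul (left_ne_zero_of_mul hμi) (hab i hai)]
      ring
  simp_rw [hterm]
  rw [sum_sub_distrib, sum_add_distrib, sum_sub_distrib, ← sum_mul, ← mul_sum, hμB]
  ring

lemma sum_div_sum_mul_nonneg (ha : ∀ i, 0 ≤ a i) (hb : ∀ i, 0 ≤ b i) (i : ι) :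
    0 ≤ (∑ j, a j) / (∑ j, b j) * b i :=
  mul_nonneg (div_nonneg (sum_nonneg fun j _ => ha j) (sum_nonneg fun j _ => hb j)) (hb i)

lemma log_sum_gap_term_nonneg (ha : ∀ i, 0 ≤ a i) (hb : ∀ i, 0 ≤ b i) (i : ι) :
    0 ≤ (∑ j, a j) / (∑ j, b j) * b i * klFun (a i / ((∑ j, a j) / (∑ j, b j) * b i)) :=
  have hμ := sum_div_sum_mul_nonneg ha hb i
  mul_nonneg hμ (klFun_nonneg (div_nonneg (ha i) hμ))

lemma log_sum_le (ha : ∀ i, 0 ≤ a i) (hb : ∀ i, 0 ≤ b i) (hab : ∀ i, a i ≠ 0 → b i ≠ 0) :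
    (∑ i, a i) * log ((∑ i, a i) / ∑ i, b i) ≤ ∑ i, a i * log (a i / b i) := by
  have := log_sum_gap_eq ha hb hab
  have := sum_nonneg fun i (_ : i ∈ univ) => log_sum_gap_term_nonneg ha hb i
  linarith

lemma eq_mul_of_log_sum_eq (ha : ∀ i, 0 ≤ a i) (hb : ∀ i, 0 ≤ b i)
    (hab : ∀ i, a i ≠ 0 → b i ≠ 0)
    (h : (∑ i, a i) * log ((∑ i, a i) / ∑ i, b i) = ∑ i, a i * log (a i / b i)) (i : ι) :
    a i = (∑ j, a j) / (∑ j, b j) * b i := by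
  have hgap := log_sum_gap_eq ha hb hab
  rw [h, sub_self, eq_comm,
    sum_eq_zero_iff_of_nonneg fun i _ => log_sum_gap_term_nonneg ha hb i] at hgap
  rcases mul_eq_zero.1 (hgap i (mem_univ i)) with hμ | hkl
  · rw [hμ]
    exact by_contra fun hai => sum_div_sum_mul_ne_zero ha hb hab hai hμ
  · exact eq_of_div_eq_one
      ((klFun_eq_zero_iff (div_nonneg (ha i) (sum_div_sum_mul_nonneg ha hb i))).1 hkl)

end LogSum

section Push

variable {X : Type*} [Fintype X] {G : X → X → ℝ}

lemma push_nonneg (hG : isStoch G) {p : X → ℝ} (hp : ∀ x, 0 ≤ p x) (y : X) :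
    0 ≤ push G p y :=
  sum_nonneg fun x _ => mul_nonneg (hG.1 y x) (hp x)

lemma mul_le_push (hG : isStoch G) {p : X → ℝ} (hp : ∀ x, 0 ≤ p x) (y x : X) :
    G y x * p x ≤ push G p y :=
  single_le_sum (fun x _ => mul_nonneg (hG.1 y x) (hp x)) (mem_univ x)

lemma KL_eq_sum_sum (hG : isStoch G) (u w : X → ℝ) :
    KL u w = ∑ y, ∑ x, G y x * u x * log (G y x * u x / (G y x * w x)) := by
  rw [sum_comm, KL]
  refine sum_congr rfl fun x _ => ?_
  have hterm : ∀ y, G y x * u x * log (G y x * u x / (G y x * w x)) =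
      G y x * (u x * log (u x / w x)) := fun y => by
    by_cases hGyx : G y x = 0
    · simp [hGyx]
    · rw [mul_div_mul_left _ _ hGyx, mul_assoc]
  simp_rw [hterm, ← sum_mul, hG.2 x, one_mul]

variable {u w : X → ℝ}

lemma push_mul_log_div_le (hG : isStoch G) (hu : ∀ x, 0 ≤ u x) (hw : ∀ x, 0 ≤ w x)
    (huw : ∀ x, u x ≠ 0 → w x ≠ 0) (y : X) :
    push G u y * log (push G u y / push G w y) ≤
      ∑ x, G y x * u x * log (G y x * u x / (G y x * w x)) :=
  log_sum_le (fun x => mul_nonneg (hG.1 y x) (hu x)) (fun x => mul_nonneg (hG.1 y x) (hw x))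
    (fun x h => mul_ne_zero (left_ne_zero_of_mul h) (huw x (right_ne_zero_of_mul h)))

lemma KL_push_le (hG : isStoch G) (hu : ∀ x, 0 ≤ u x) (hw : ∀ x, 0 ≤ w x)
    (huw : ∀ x, u x ≠ 0 → w x ≠ 0) : KL (push G u) (push G w) ≤ KL u w := by
  rw [KL_eq_sum_sum hG u w]
  exact sum_le_sum fun y _ => push_mul_log_div_le hG hu hw huw y

lemma eq_mul_of_KL_push_eq (hG : isStoch G) (hu : ∀ x, 0 ≤ u x) (hw : ∀ x, 0 ≤ w x)
    (huw : ∀ x, u x ≠ 0 → w x ≠ 0) (h : KL (push G u) (push G w) = KL u w) {y x : X}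
    (hyx : 0 < G y x) : u x = push G u y / push G w y * w x := by
  rw [KL_eq_sum_sum hG u w] at h
  have hy := (sum_eq_sum_iff_of_le fun y _ => push_mul_log_div_le hG hu hw huw y).1 h y (mem_univ y)
  have := eq_mul_of_log_sum_eq (fun x => mul_nonneg (hG.1 y x) (hu x))
    (fun x => mul_nonneg (hG.1 y x) (hw x))
    (fun x h => mul_ne_zero (left_ne_zero_of_mul h) (huw x (right_ne_zero_of_mul h))) hy x
  rw [← mul_right_inj' hyx.ne', this]
  simp only [push]
  ring

end Push

section Island

variable {X : Type*} [Fintype X] {G : X → X → ℝ} {c : Set X}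

lemma islandRel.symm {a b : X} (h : islandRel G a b) : islandRel G b a :=
  let ⟨y, ha, hb⟩ := h
  ⟨y, hb, ha⟩

lemma IsIsland.mem_iff_of_islandRel (hc : IsIsland G c) {a b : X} (h : islandRel G a b) :
    a ∈ c ↔ b ∈ c := by
  obtain ⟨x₀, rfl⟩ := hc
  have hab := Relation.EqvGen.rel _ _ h
  exact ⟨(Relation.EqvGen.symm _ _ hab).trans _ _ _, hab.trans _ _ _⟩

lemma IsIsland.apply_eq {β : Sort*} (hc : IsIsland G c) {g : X → β}
    (hg : ∀ a b, islandRel G a b → g a = g b) {a b : X} (ha : a ∈ c) (hb : b ∈ c) :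
    g a = g b := by
  obtain ⟨x₀, rfl⟩ := hc
  exact congrArg (Quot.lift g hg)
    (Quot.eqvGen_sound (Relation.EqvGen.trans _ _ _ ha (Relation.EqvGen.symm _ _ hb)))

lemma IsIsland.nonempty (hc : IsIsland G c) : c.Nonempty := by
  obtain ⟨x₀, rfl⟩ := hc
  exact ⟨x₀, Relation.EqvGen.refl x₀⟩

lemma IsIsland.eq_of_KL_push_eq (hG : isStoch G) (hc : IsIsland G c) {p w : X → ℝ}
    (hp : isDist p) (hw : isDist w) (hps : ∀ x, p x ≠ 0 → x ∈ c) (hws : ∀ x, w x ≠ 0 → x ∈ c)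
    (hwc : ∀ x ∈ c, 0 < w x) (h : KL (push G p) (push G w) = KL p w) : p = w := by
  have hpw : ∀ x, p x ≠ 0 → w x ≠ 0 := fun x hx => (hwc x (hps x hx)).ne'
  have hout : ∀ x ∉ c, p x = 0 ∧ w x = 0 := fun x hx =>
    ⟨not_imp_comm.1 (hps x) hx, not_imp_comm.1 (hws x) hx⟩
  have hratio : ∀ a b, islandRel G a b → p a / w a = p b / w b := by
    rintro a b ⟨y, hya, hyb⟩
    by_cases ha : a ∈ c
    · have hb := (hc.mem_iff_of_islandRel ⟨y, hya, hyb⟩).1 ha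
      rw [eq_mul_of_KL_push_eq hG hp.1 hw.1 hpw h hya, eq_mul_of_KL_push_eq hG hp.1 hw.1 hpw h hyb,
        mul_div_cancel_right₀ _ (hwc a ha).ne', mul_div_cancel_right₀ _ (hwc b hb).ne']
    · have hb := mt (hc.mem_iff_of_islandRel ⟨y, hya, hyb⟩).2 ha
      simp [(hout a ha).1, (hout b hb).1]
  obtain ⟨x₀, hx₀⟩ := hc.nonempty
  have hprop : ∀ x, p x = p x₀ / w x₀ * w x := fun x => by
    by_cases hx : x ∈ c
    · rw [← hc.apply_eq hratio hx hx₀, div_mul_cancel₀ _ (hwc x hx).ne']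
    · simp [(hout x hx).1, (hout x hx).2]
  have hρ : p x₀ / w x₀ = 1 := by
    simpa [← mul_sum, hw.2] using (sum_congr rfl fun x _ => hprop x).symm.trans hp.2
  funext x
  rw [hprop x, hρ, one_mul]

end Island

lemma exists_mul_lt_mul_negMulLog {α : ℝ} (hα : 0 < α) (K : ℝ) :
    ∃ t, 0 < t ∧ t < 1 ∧ K * t < α * negMulLog t := by
  set t := exp (-(|K| + 1) / α)
  have hK : 0 < |K| + 1 := by positivity
  refine ⟨t, exp_pos _, exp_lt_one_iff.2 (div_neg_of_neg_of_pos (neg_lt_zero.2 hK) hα), ?_⟩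
  have : α * negMulLog t = (|K| + 1) * t := by
    simp only [t, negMulLog, log_exp]
    field_simp
  rw [this]
  nlinarith [le_abs_self K, exp_pos (-(|K| + 1) / α)]

lemma negMulLog_mix_le {a b t : ℝ} (ha : 0 ≤ a) (hb : 0 ≤ b) (ht0 : 0 < t) (ht1 : t < 1) :
    negMulLog ((1 - t) * a + t * b) ≤ negMulLog a +
      t * (if a = 0 then negMulLog b else (-log a - 1) * (b - a)) +
      negMulLog t * (if a = 0 then b else 0) := by
  rcases ha.eq_or_lt with rfl | hpos
  · simp only [mul_zero, zero_add, negMulLog_mul, negMulLog_zero, if_true]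
    linarith
  · have := negMulLog_le_tangent hpos (by nlinarith : 0 ≤ (1 - t) * a + t * b)
    simp only [hpos.ne', if_false]
    linarith

section Entropy

variable {X : Type*} [Fintype X]

lemma Ent_eq_sum_negMulLog (p : X → ℝ) : Ent p = ∑ x, negMulLog (p x) := by
  simp [Ent, negMulLog]

lemma Ent_mix_le {a b : X → ℝ} (ha : ∀ x, 0 ≤ a x) (hb : ∀ x, 0 ≤ b x) :
    ∃ K, ∀ t, 0 < t → t < 1 → Ent (fun x => (1 - t) * a x + t * b x) ≤
      Ent a + K * t + negMulLog t * ∑ x, if a x = 0 then b x else 0 := by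
  refine ⟨∑ x, if a x = 0 then negMulLog (b x) else (-log (a x) - 1) * (b x - a x),
    fun t ht0 ht1 => ?_⟩
  simp only [Ent_eq_sum_negMulLog]
  calc _ ≤ _ := sum_le_sum fun x _ => negMulLog_mix_le (ha x) (hb x) ht0 ht1
    _ = _ := by rw [sum_add_distrib, sum_add_distrib, ← mul_sum, ← mul_sum]; ring

variable [DecidableEq X]

def mixDirac (p : X → ℝ) (v : X) (t : ℝ) : X → ℝ := fun x => (1 - t) * p x + if x = v then t else 0

variable {p : X → ℝ} {v : X} {t : ℝ}

lemma isDist_mixDirac (hp : isDist p) (ht0 : 0 ≤ t) (ht1 : t ≤ 1) : isDist (mixDirac p v t) := by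
  refine ⟨fun x => add_nonneg (mul_nonneg (by linarith) (hp.1 x)) (by split_ifs <;> simp [ht0]), ?_⟩
  simp [mixDirac, sum_add_distrib, ← mul_sum, hp.2]

lemma Ent_mixDirac (hp : isDist p) (hpv : p v = 0) :
    Ent (mixDirac p v t) = negMulLog t + negMulLog (1 - t) + (1 - t) * Ent p := by
  have hterm : ∀ x, negMulLog (mixDirac p v t x) =
      p x * negMulLog (1 - t) + (1 - t) * negMulLog (p x) + if x = v then negMulLog t else 0 := by
    intro x
    by_cases hx : x = v
    · simp [mixDirac, hx, hpv]
    · simp [mixDirac, hx, negMulLog_mul]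
  simp only [Ent_eq_sum_negMulLog, hterm, sum_add_distrib, ← sum_mul, ← mul_sum, hp.2, one_mul,
    sum_ite_eq', mem_univ, if_true]
  ring

lemma push_mixDirac (G : X → X → ℝ) :
    push G (mixDirac p v t) = fun y => (1 - t) * push G p y + t * G y v := by
  funext y
  simp only [push, mixDirac, mul_add, sum_add_distrib, mul_ite, mul_zero, sum_ite_eq', mem_univ,
    if_true, mul_left_comm (G y _) (1 - t), ← mul_sum]
  ring

lemma sum_mixDirac_mul (f : X → ℝ) :
    ∑ x, mixDirac p v t x * f x = (1 - t) * ∑ x, p x * f x + t * f v := by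
  simp [mixDirac, add_mul, sum_add_distrib, mul_sum, mul_assoc]

end Entropy

section Cost

variable {X : Type*} [Fintype X] {G : X → X → ℝ} {f : X → ℝ} {p q : X → ℝ}

lemma exists_cost_mixDirac_lt [DecidableEq X] (hG : isStoch G) (hp : isDist p) {v y : X}
    (hpv : p v = 0) (hyv : 0 < G y v) (hyp : 0 < push G p y) :
    ∃ t, 0 < t ∧ t < 1 ∧ cost G f (mixDirac p v t) < cost G f p := by
  obtain ⟨K, hK⟩ := Ent_mix_le (push_nonneg hG hp.1) (fun y => hG.1 y v)
  have hβ : ∑ x, (if push G p x = 0 then G x v else 0) ≤ 1 - G y v := by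
    have hterm : ∀ x,
        (if push G p x = 0 then G x v else 0) ≤ G x v - if x = y then G y v else 0 := by
      intro x
      by_cases hx : x = y
      · simp [hx, hyp.ne']
      · simp only [hx, if_false, sub_zero]
        split_ifs <;> simp [hG.1 x v]
    calc _ ≤ _ := sum_le_sum fun x _ => hterm x
      _ = 1 - G y v := by rw [sum_sub_distrib, hG.2 v, sum_ite_eq']; simp
  obtain ⟨t, ht0, ht1, ht⟩ := exists_mul_lt_mul_negMulLog hyv (K + Ent p + f v - ∑ x, p x * f x)
  refine ⟨t, ht0, ht1, ?_⟩
  have hEnt := hK t ht0 ht1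
  have h1 : 0 ≤ negMulLog t := negMulLog_nonneg ht0.le ht1.le
  have h2 : 0 ≤ negMulLog (1 - t) := negMulLog_nonneg (by linarith) (by linarith)
  have h3 := mul_le_mul_of_nonneg_left hβ h1
  rw [cost, cost, Ent_mixDirac hp hpv, push_mixDirac, sum_mixDirac_mul]
  linarith

lemma IsIsland.ne_zero_of_forall_cost_le (hG : isStoch G) {c : Set X} (hc : IsIsland G c)
    (hp : isDist p) (hps : ∀ x, p x ≠ 0 → x ∈ c)
    (hpmin : ∀ r, isDist r → (∀ x, r x ≠ 0 → x ∈ c) → cost G f p ≤ cost G f r)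
    {x : X} (hx : x ∈ c) : p x ≠ 0 := by
  classical
  have hstep : ∀ u v, islandRel G u v → p u ≠ 0 → p v ≠ 0 := by
    rintro u v ⟨y, hyu, hyv⟩ hu hv
    have hvc : v ∈ c := (hc.mem_iff_of_islandRel ⟨y, hyu, hyv⟩).1 (hps u hu)
    have hyp : 0 < push G p y :=
      (mul_pos hyu (lt_of_le_of_ne (hp.1 u) (Ne.symm hu))).trans_le (mul_le_push hG hp.1 y u)
    obtain ⟨t, ht0, ht1, hlt⟩ := exists_cost_mixDirac_lt (f := f) hG hp hv hyv hyp
    refine (hpmin _ (isDist_mixDirac hp ht0.le ht1.le) fun x hx => ?_).not_gt hlt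
    by_cases hxv : x = v
    · exact hxv ▸ hvc
    · exact hps x fun hpx => hx (by simp [mixDirac, hxv, hpx])
  obtain ⟨b, -, hb⟩ := exists_ne_zero_of_sum_ne_zero (hp.2.symm ▸ one_ne_zero : ∑ x, p x ≠ 0)
  have hsupp := hc.apply_eq (g := fun x => p x ≠ 0)
    (fun a b hab => propext ⟨hstep a b hab, hstep b a hab.symm⟩)
    (hps b hb) hx
  exact hsupp ▸ hb

end Cost

section Midpoint

variable {X : Type*} [Fintype X] {p q : X → ℝ}

lemma KL_eq_neg_Ent_sub {w : X → ℝ} (hpw : ∀ x, p x ≠ 0 → w x ≠ 0) :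
    KL p w = -Ent p - ∑ x, p x * log (w x) := by
  rw [KL, Ent, neg_neg, ← sum_sub_distrib]
  exact sum_congr rfl fun x _ => mul_log_div_eq_sub (hpw x)

lemma KL_add_KL_midpoint (hp : ∀ x, 0 ≤ p x) (hq : ∀ x, 0 ≤ q x) :
    KL p (fun x => (p x + q x) / 2) + KL q (fun x => (p x + q x) / 2) =
      2 * Ent (fun x => (p x + q x) / 2) - Ent p - Ent q := by
  have hpm : ∀ x, p x ≠ 0 → (p x + q x) / 2 ≠ 0 := fun x hx =>
    (div_pos (add_pos_of_pos_of_nonneg (lt_of_le_of_ne (hp x) (Ne.symm hx)) (hq x)) two_pos).ne'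
  have hqm : ∀ x, q x ≠ 0 → (p x + q x) / 2 ≠ 0 := fun x hx =>
    (div_pos (add_pos_of_nonneg_of_pos (hp x) (lt_of_le_of_ne (hq x) (Ne.symm hx))) two_pos).ne'
  have hcross : ∑ x, p x * log ((p x + q x) / 2) + ∑ x, q x * log ((p x + q x) / 2) =
      -2 * Ent (fun x => (p x + q x) / 2) := by
    rw [Ent, mul_neg, neg_mul, neg_neg, mul_sum, ← sum_add_distrib]
    exact sum_congr rfl fun x _ => by ring
  rw [KL_eq_neg_Ent_sub hpm, KL_eq_neg_Ent_sub hqm]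
  linarith

lemma isDist_midpoint (hp : isDist p) (hq : isDist q) : isDist (fun x => (p x + q x) / 2) :=
  ⟨fun x => by linarith [hp.1 x, hq.1 x], by simp [← sum_div, sum_add_distrib, hp.2, hq.2]⟩

lemma push_midpoint (G : X → X → ℝ) :
    push G (fun x => (p x + q x) / 2) = fun y => (push G p y + push G q y) / 2 := by
  funext y
  simp only [push, ← sum_add_distrib, sum_div]
  exact sum_congr rfl fun x _ => by ring

lemma cost_add_cost_sub_two_mul_cost_midpoint {G : X → X → ℝ} (hG : isStoch G) (f : X → ℝ)
    (hp : ∀ x, 0 ≤ p x) (hq : ∀ x, 0 ≤ q x) :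
    cost G f p + cost G f q - 2 * cost G f (fun x => (p x + q x) / 2) =
      (KL p (fun x => (p x + q x) / 2) - KL (push G p) (push G fun x => (p x + q x) / 2)) +
      (KL q (fun x => (p x + q x) / 2) - KL (push G q) (push G fun x => (p x + q x) / 2)) := by
  have hKL := KL_add_KL_midpoint hp hq
  have hKL' := KL_add_KL_midpoint (push_nonneg hG hp) (push_nonneg hG hq)
  have hlin : ∑ x, (p x + q x) / 2 * f x = (∑ x, p x * f x + ∑ x, q x * f x) / 2 := by
    rw [← sum_add_distrib, sum_div]
    exact sum_congr rfl fun x _ => by ring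
  simp only [cost, hlin]
  rw [push_midpoint] at *
  linarith

end Midpoint

/-- the minimizer of the cost over distributions supported in a
single island `c` is unique. -/
theorem island_minimizer_unique {X : Type*} [Fintype X]
    (G : X → X → ℝ) (f : X → ℝ) (hG : isStoch G)
    (c : Set X) (hc : IsIsland G c)
    (p q : X → ℝ) (hp : isDist p) (hq : isDist q)
    (hps : ∀ x, p x ≠ 0 → x ∈ c) (hqs : ∀ x, q x ≠ 0 → x ∈ c)
    (hpmin : ∀ r, isDist r → (∀ x, r x ≠ 0 → x ∈ c) → cost G f p ≤ cost G f r)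
    (hqmin : ∀ r, isDist r → (∀ x, r x ≠ 0 → x ∈ c) → cost G f q ≤ cost G f r) :
    p = q := by
  set m : X → ℝ := fun x => (p x + q x) / 2 with hm
  have hmdist : isDist m := isDist_midpoint hp hq
  have hmc : ∀ x ∈ c, 0 < m x := fun x hx => by
    have := lt_of_le_of_ne (hp.1 x) (hc.ne_zero_of_forall_cost_le hG hp hps hpmin hx).symm
    simp only [m]
    linarith [hq.1 x]
  have hms : ∀ x, m x ≠ 0 → x ∈ c := fun x hx => by
    by_contra hxc
    exact hx (by simp [m, not_imp_comm.1 (hps x) hxc, not_imp_comm.1 (hqs x) hxc])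
  have hsum := cost_add_cost_sub_two_mul_cost_midpoint hG f hp.1 hq.1
  rw [← hm] at hsum
  have hKLp := KL_push_le hG hp.1 hmdist.1 fun x hx => (hmc x (hps x hx)).ne'
  have hKLq := KL_push_le hG hq.1 hmdist.1 fun x hx => (hmc x (hqs x hx)).ne'
  have hpm : p = m := hc.eq_of_KL_push_eq hG hp hmdist hps hms hmc (by
    linarith [hpmin q hq hqs, hqmin p hp hps, hpmin m hmdist hms])
  funext x
  have hx : p x = (p x + q x) / 2 := congrFun hpm x
  linarith
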